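/- arXiv:1402.6079 — 2 statements merged into one kernel-verified Lean document; each statement's English description precedes it below -/
import Mathlib

section
/- In a Steiner minimal tree in the Euclidean plane, any two edges meeting at a common vertex form an angle of at least 120 degrees. -/
/-!
If edges `v a`, `v b` met at an angle below `2π/3`, put a new Steiner point `s` near `v` and
replace `v a`, `v b` by `s v`, `s a`, `s b`: the graph gains one vertex and one edge and stays
connected, so it is again a Steiner tree for `M` as long as `s` avoids the old vertices. With
`x̂`, `ŷ` the unit vectors from `v` toward `a`, `b`, moving `s` away from `v` along `x̂ + ŷ` changes
the total length at rate `‖x̂ + ŷ‖ - ‖x̂ + ŷ‖²`, which is negative since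
`‖x̂ + ŷ‖² = 2 + 2 cos ∠ a v b > 1`. The improving positions of `s` form a nonempty open set,
which the finitely many old vertices cannot cover.
-/

open scoped Classical

noncomputable section

/-- The Euclidean plane. -/
abbrev E2 := EuclideanSpace ℝ (Fin 2)

/-- Length of an (unordered) edge under an embedding of vertices in the plane. -/
noncomputable def edgeLen {α : Type*} (pos : α → E2) : Sym2 α → ℝ :=
  Sym2.lift ⟨fun a b => dist (pos a) (pos b), fun _ _ => dist_comm _ _⟩

/-- Total Euclidean length of a graph whose vertices are embedded in the plane
(edges are straight segments). -/
noncomputable def treeLength {n : ℕ} (G : SimpleGraph (Fin n)) (pos : Fin n → E2) : ℝ :=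
  ∑ e ∈ G.edgeFinset, edgeLen pos e

/-- A Steiner tree connecting a finite boundary set `M ⊆ ℝ²`: a tree embedded in the
plane (straight segment edges) whose vertex set contains `M`. -/
def IsSteinerTree (M : Finset E2) {n : ℕ} (G : SimpleGraph (Fin n)) (pos : Fin n → E2) : Prop :=
  G.IsTree ∧ Function.Injective pos ∧ ↑M ⊆ Set.range pos

/-- A Steiner minimal tree for `M`: a Steiner tree for `M` of minimal total length among
all Steiner trees for `M` (with any number of extra Steiner points). -/
def IsSMT (M : Finset E2) {n : ℕ} (G : SimpleGraph (Fin n)) (pos : Fin n → E2) : Prop :=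
  IsSteinerTree M G pos ∧
    ∀ (m : ℕ) (G' : SimpleGraph (Fin m)) (pos' : Fin m → E2),
      IsSteinerTree M G' pos' → treeLength G pos ≤ treeLength G' pos'

open Filter Topology
open scoped RealInnerProductSpace EuclideanGeometry

theorem HasDerivAt.exists_right_lt_of_neg {f : ℝ → ℝ} {f' x : ℝ} (hf : HasDerivAt f f' x)
    (hf' : f' < 0) : ∃ y, x < y ∧ f y < f x := by
  have hslope : ∀ᶠ y in 𝓝[>] x, slope f x y < 0 :=
    (hf.tendsto_slope.eventually (gt_mem_nhds hf')).filter_mono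
      (nhdsWithin_mono _ fun _ hy => ne_of_gt hy)
  obtain ⟨y, hy, hxy⟩ := (hslope.and self_mem_nhdsWithin).exists
  refine ⟨y, hxy, ?_⟩
  rw [slope_def_field, div_neg_iff] at hy
  rcases hy with ⟨-, h⟩ | ⟨h, -⟩ <;> linarith

section InnerProductSpace

variable {V : Type*} [NormedAddCommGroup V] [InnerProductSpace ℝ V]

theorem hasDerivAt_norm_sub_smul {x : V} (hx : x ≠ 0) (u : V) :
    HasDerivAt (fun t : ℝ => ‖x - t • u‖) (-⟪x, u⟫ / ‖x‖) 0 := by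
  have hline : HasDerivAt (fun t : ℝ => x - t • u) (-u) 0 := by
    simpa using ((hasDerivAt_id (0 : ℝ)).smul_const u).const_sub x
  have hsq := hline.norm_sq.sqrt (by simpa using hx)
  simp only [Real.sqrt_sq (norm_nonneg _)] at hsq
  convert hsq using 1
  simp only [zero_smul, sub_zero, inner_neg_right, mul_neg]
  field_simp

theorem one_lt_norm_add_of_angle_lt {x y : V} (hx : ‖x‖ = 1) (hy : ‖y‖ = 1)
    (h : InnerProductGeometry.angle x y < 2 * Real.pi / 3) : 1 < ‖x + y‖ := by
  have hcos : -(1 / 2) < ⟪x, y⟫ := by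
    have h23 : Real.cos (2 * Real.pi / 3) = -(1 / 2) := by
      rw [show 2 * Real.pi / 3 = Real.pi - Real.pi / 3 by ring, Real.cos_pi_sub,
        Real.cos_pi_div_three]
    have := Real.cos_lt_cos_of_nonneg_of_le_pi (InnerProductGeometry.angle_nonneg x y)
      (by linarith [Real.pi_pos]) h
    rwa [InnerProductGeometry.cos_angle, hx, hy, mul_one, div_one, h23] at this
  have hsq : ‖x + y‖ ^ 2 = 2 + 2 * ⟪x, y⟫ := by
    rw [norm_add_sq_real, hx, hy]; ring
  nlinarith [norm_nonneg (x + y)]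

theorem exists_dist_add_dist_add_dist_lt {a b v : V} (ha : a ≠ v) (hb : b ≠ v)
    (h : ∠ a v b < 2 * Real.pi / 3) :
    ∃ s, dist s v + dist s a + dist s b < dist v a + dist v b := by
  set x := a - v
  set y := b - v
  have hx : x ≠ 0 := sub_ne_zero.mpr ha
  have hy : y ≠ 0 := sub_ne_zero.mpr hb
  set u := ‖x‖⁻¹ • x + ‖y‖⁻¹ • y
  have hu : 1 < ‖u‖ := by
    have hunit : ∀ z : V, z ≠ 0 → ‖‖z‖⁻¹ • z‖ = 1 := fun z hz => by
      rw [norm_smul, norm_inv, norm_norm, inv_mul_cancel₀ (norm_ne_zero_iff.mpr hz)]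
    apply one_lt_norm_add_of_angle_lt (hunit x hx) (hunit y hy)
    rwa [InnerProductGeometry.angle_smul_left_of_pos _ _ (inv_pos.mpr (norm_pos_iff.mpr hx)),
      InnerProductGeometry.angle_smul_right_of_pos _ _ (inv_pos.mpr (norm_pos_iff.mpr hy))]
  have hu_sq : ⟪x, u⟫ / ‖x‖ + ⟪y, u⟫ / ‖y‖ = ‖u‖ ^ 2 := by
    rw [← real_inner_self_eq_norm_sq]
    conv_rhs => rw [inner_add_left, real_inner_smul_left, real_inner_smul_left]
    ring
  have hderiv := (((hasDerivAt_id' (0 : ℝ)).mul_const ‖u‖).add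
    (hasDerivAt_norm_sub_smul hx u)).add (hasDerivAt_norm_sub_smul hy u)
  obtain ⟨t, ht, hlt⟩ := hderiv.exists_right_lt_of_neg (by rw [neg_div, neg_div]; nlinarith)
  have hdist : ∀ p, dist (v + t • u) p = ‖(p - v) - t • u‖ := fun p => by
    rw [dist_eq_norm, ← norm_neg]; congr 1; abel
  refine ⟨v + t • u, ?_⟩
  rw [hdist, hdist, hdist, sub_self, zero_sub, norm_neg, norm_smul, Real.norm_of_nonneg ht.le,
    dist_comm, dist_eq_norm, dist_comm, dist_eq_norm]
  simpa using hlt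

theorem exists_notMem_dist_add_dist_add_dist_lt {S : Set V} (hS : S.Finite) {a b v : V}
    (ha : a ≠ v) (hb : b ≠ v) (h : ∠ a v b < 2 * Real.pi / 3) :
    ∃ s ∉ S, dist s v + dist s a + dist s b < dist v a + dist v b := by
  have : Nontrivial V := ⟨⟨a, v, ha⟩⟩
  have hopen : IsOpen {s | dist s v + dist s a + dist s b < dist v a + dist v b} :=
    isOpen_lt (by fun_prop) continuous_const
  obtain ⟨s, hs, hsS⟩ := (hS.countable.dense_compl ℝ).inter_open_nonempty _ hopen
    (exists_dist_add_dist_add_dist_lt ha hb h)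
  exact ⟨s, hsS, hs⟩

end InnerProductSpace

namespace SimpleGraph

variable {n : ℕ} (G : SimpleGraph (Fin n)) (v a b : Fin n)

def steinerSplitEdges : Finset (Sym2 (Fin (n + 1))) :=
  (G.edgeFinset \ {s(v, a), s(v, b)}).image (Sym2.map Fin.castSucc) ∪
    {s(Fin.last n, v.castSucc), s(Fin.last n, a.castSucc), s(Fin.last n, b.castSucc)}

def steinerSplit : SimpleGraph (Fin (n + 1)) :=
  fromEdgeSet ↑(G.steinerSplitEdges v a b)

variable {G v a b}

theorem disjoint_image_map_castSucc {s : Finset (Sym2 (Fin n))} {t : Finset (Sym2 (Fin (n + 1)))}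
    (ht : ∀ e ∈ t, Fin.last n ∈ e) : Disjoint (s.image (Sym2.map Fin.castSucc)) t := by
  rw [Finset.disjoint_left]
  rintro _ he het
  obtain ⟨e, -, rfl⟩ := Finset.mem_image.mp he
  obtain ⟨x, -, hx⟩ := Sym2.mem_map.mp (ht _ het)
  exact Fin.castSucc_ne_last x hx

theorem not_isDiag_of_mem_steinerSplitEdges {e : Sym2 (Fin (n + 1))}
    (he : e ∈ G.steinerSplitEdges v a b) : ¬ e.IsDiag := by
  simp only [steinerSplitEdges, Finset.mem_union, Finset.mem_image, Finset.mem_sdiff,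
    mem_edgeFinset, Finset.mem_insert, Finset.mem_singleton] at he
  rcases he with ⟨e, ⟨he, -⟩, rfl⟩ | rfl | rfl | rfl
  · induction e using Sym2.ind with
    | _ p q => simpa using he.ne
  all_goals simpa using (Fin.castSucc_ne_last _).symm

theorem edgeSet_steinerSplit : (G.steinerSplit v a b).edgeSet = ↑(G.steinerSplitEdges v a b) := by
  rw [steinerSplit, edgeSet_fromEdgeSet, sdiff_eq_left, Set.disjoint_left]
  exact fun _ he => not_isDiag_of_mem_steinerSplitEdges he

theorem pair_subset_edgeFinset (hva : G.Adj v a) (hvb : G.Adj v b) :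
    ({s(v, a), s(v, b)} : Finset (Sym2 (Fin n))) ⊆ G.edgeFinset := by
  simp [Finset.insert_subset_iff, hva, hvb]

theorem card_steinerSplitEdges (hva : G.Adj v a) (hvb : G.Adj v b) (hab : a ≠ b) :
    (G.steinerSplitEdges v a b).card = G.edgeFinset.card + 1 := by
  have hpair := pair_subset_edgeFinset hva hvb
  have hpair_card : ({s(v, a), s(v, b)} : Finset (Sym2 (Fin n))).card = 2 :=
    Finset.card_pair (by simp [hab, hva.ne'])
  have hstar_card : ({s(Fin.last n, v.castSucc), s(Fin.last n, a.castSucc),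
      s(Fin.last n, b.castSucc)} : Finset (Sym2 (Fin (n + 1)))).card = 3 := by
    rw [Finset.card_eq_three]
    exact ⟨_, _, _, by simp [hva.ne], by simp [hvb.ne], by simp [hab], rfl⟩
  have := Finset.card_le_card hpair
  rw [steinerSplitEdges, Finset.card_union_of_disjoint (disjoint_image_map_castSucc (by simp)),
    Finset.card_image_of_injective _ (Sym2.map.injective (Fin.castSucc_injective n)),
    Finset.card_sdiff_of_subset hpair, hpair_card, hstar_card]
  omega

theorem steinerSplit_adj {p q : Fin (n + 1)} :
    (G.steinerSplit v a b).Adj p q ↔ s(p, q) ∈ G.steinerSplitEdges v a b := by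
  rw [← mem_edgeSet, edgeSet_steinerSplit, Finset.mem_coe]

theorem Connected.steinerSplit (hG : G.Connected) (hva : G.Adj v a) (hvb : G.Adj v b) :
    (G.steinerSplit v a b).Connected := by
  set G' := G.steinerSplit v a b
  have hstar : ∀ p ∈ ({v, a, b} : Finset (Fin n)), G'.Adj (Fin.last n) p.castSucc := by
    intro p hp
    simp only [Finset.mem_insert, Finset.mem_singleton] at hp
    rw [steinerSplit_adj, steinerSplitEdges]
    rcases hp with rfl | rfl | rfl <;> simp
  have hedge : ∀ p q : Fin n, G.Adj p q → G'.Reachable p.castSucc q.castSucc := by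
    intro p q hpq
    by_cases hpair : s(p, q) ∈ ({s(v, a), s(v, b)} : Finset _)
    · have hp : p ∈ ({v, a, b} : Finset (Fin n)) := by aesop
      have hq : q ∈ ({v, a, b} : Finset (Fin n)) := by aesop
      exact (hstar p hp).symm.reachable.trans (hstar q hq).reachable
    · refine (steinerSplit_adj.mpr ?_).reachable
      rw [steinerSplitEdges, Finset.mem_union, Finset.mem_image]
      exact Or.inl ⟨s(p, q), Finset.mem_sdiff.mpr ⟨mem_edgeFinset.mpr hpq, hpair⟩, rfl⟩
  have hold : ∀ p : Fin n, G'.Reachable v.castSucc p.castSucc := fun p => by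
    have := (reachable_iff_reflTransGen _ _).mp (hG.preconnected v p)
    rw [reachable_iff_reflTransGen]
    exact Relation.ReflTransGen.lift' Fin.castSucc
      (fun p q hpq => (reachable_iff_reflTransGen _ _).mp (hedge p q hpq)) v p this
  refine (connected_iff_exists_forall_reachable _).mpr ⟨v.castSucc, fun p => ?_⟩
  induction p using Fin.lastCases with
  | last => exact (hstar v (by simp)).symm.reachable
  | cast p => exact hold p

theorem IsTree.steinerSplit (hG : G.IsTree) (hva : G.Adj v a) (hvb : G.Adj v b) (hab : a ≠ b) :
    (G.steinerSplit v a b).IsTree := by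
  rw [isTree_iff_connected_and_card]
  refine ⟨hG.connected.steinerSplit hva hvb, ?_⟩
  rw [edgeSet_steinerSplit, Nat.card_coe_set_eq, Set.ncard_coe_finset,
    card_steinerSplitEdges hva hvb hab, Nat.card_fin]
  simpa using hG.card_edgeFinset

end SimpleGraph

section SteinerSplit

open SimpleGraph

variable {n : ℕ} {G : SimpleGraph (Fin n)} {v a b : Fin n}

theorem edgeLen_snoc_map_castSucc (pos : Fin n → E2) (s : E2) (e : Sym2 (Fin n)) :
    edgeLen (Fin.snoc pos s : Fin (n + 1) → E2) (e.map Fin.castSucc) = edgeLen pos e := by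
  induction e using Sym2.ind with
  | _ p q => simp [edgeLen]

theorem treeLength_steinerSplit (hva : G.Adj v a) (hvb : G.Adj v b) (hab : a ≠ b)
    (pos : Fin n → E2) (s : E2) :
    treeLength (G.steinerSplit v a b) (Fin.snoc pos s) =
      treeLength G pos - dist (pos v) (pos a) - dist (pos v) (pos b) +
        (dist s (pos v) + dist s (pos a) + dist s (pos b)) := by
  have hedges : (G.steinerSplit v a b).edgeFinset = G.steinerSplitEdges v a b :=
    Finset.coe_injective (by rw [coe_edgeFinset, edgeSet_steinerSplit])
  have hpair := pair_subset_edgeFinset hva hvb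
  rw [treeLength, hedges, steinerSplitEdges,
    Finset.sum_union (disjoint_image_map_castSucc (by simp)),
    Finset.sum_image fun _ _ _ _ h => Sym2.map.injective (Fin.castSucc_injective n) h]
  simp only [edgeLen_snoc_map_castSucc]
  rw [Finset.sum_sdiff_eq_sub hpair, Finset.sum_pair (by simp [hab, hva.ne']),
    Finset.sum_insert (by simp [hva.ne, hvb.ne]), Finset.sum_pair (by simp [hab])]
  simp only [edgeLen, treeLength, Sym2.lift_mk, Fin.snoc_last, Fin.snoc_castSucc]
  ring

theorem IsSteinerTree.steinerSplit {M : Finset E2} {pos : Fin n → E2} {s : E2}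
    (h : IsSteinerTree M G pos) (hva : G.Adj v a) (hvb : G.Adj v b) (hab : a ≠ b)
    (hs : s ∉ Set.range pos) :
    IsSteinerTree M (G.steinerSplit v a b) (Fin.snoc pos s) :=
  ⟨h.1.steinerSplit hva hvb hab, Fin.snoc_injective_of_injective h.2.1 hs,
    h.2.2.trans (by simp)⟩

end SteinerSplit

/-- In a Steiner minimal tree in the Euclidean plane, any two edges meeting
at a common vertex form an angle of at least 120 degrees. -/
theorem smt_angles_ge_120 (M : Finset E2) {n : ℕ} (G : SimpleGraph (Fin n))
    (pos : Fin n → E2) (h : IsSMT M G pos) (v a b : Fin n)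
    (hva : G.Adj v a) (hvb : G.Adj v b) (hab : a ≠ b) :
    2 * Real.pi / 3 ≤ EuclideanGeometry.angle (pos a) (pos v) (pos b) := by
  by_contra! hlt
  obtain ⟨hsteiner, hmin⟩ := h
  obtain ⟨s, hs, hshorter⟩ := exists_notMem_dist_add_dist_add_dist_lt (Set.finite_range pos)
    (hsteiner.2.1.ne hva.ne') (hsteiner.2.1.ne hvb.ne') hlt
  have hle := hmin _ _ _ (hsteiner.steinerSplit hva hvb hab hs)
  rw [treeLength_steinerSplit hva hvb hab] at hle
  linarith
end
end

section
/- For any three points A, B, C in the plane all of whose pairwise angles in triangle ABC are less than 120 degrees, the Fermat–Torricelli point T (the point minimizing the sum of distances to A, B, C) is the unique point at which the three segments TA, TB, TC pairwise form angles of exactly 120 degrees. -/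
/-!
Write `e_P(T)` for the unit vector from `T` towards `P`. For `T ≠ P`,
`dist x P = dist T P - ⟪e_P(T), x - T⟫ + O(‖x - T‖ ^ 2)`, and the linear part is always a lower
bound (Cauchy–Schwarz). At a minimiser `T` of the sum of distances the first variation must
vanish, so `e_A + e_B + e_C = 0`, which for three unit vectors means pairwise angles of 120°. At a
vertex, say `A`, the same argument only gives `‖e_B + e_C‖ ≤ 1`, i.e. `∠BAC ≥ 120°`, which is
excluded. Conversely, if `T'` sees the sides under 120° then `e_A + e_B + e_C = 0` at `T'`, so
`T'` is a minimiser by the lower bound, and equality in the lower bounds at the minimiser `T`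
puts `A`, `B`, `C` on the line `T'T` unless `T = T'`.
-/

noncomputable section

open EuclideanGeometry

open Filter Topology
open scoped RealInnerProductSpace

namespace FermatTorricelli

variable {V : Type*} [NormedAddCommGroup V] [InnerProductSpace ℝ V]

/-- The unit vector from `T` towards `P`, or `0` when `P = T`. -/
def unitDir (T P : V) : V := ‖P - T‖⁻¹ • (P - T)

lemma norm_unitDir {T P : V} (h : P ≠ T) : ‖unitDir T P‖ = 1 :=
  norm_smul_inv_norm (sub_ne_zero.mpr h)

lemma norm_unitDir_le_one (T P : V) : ‖unitDir T P‖ ≤ 1 := by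
  rcases eq_or_ne P T with rfl | h
  · simp [unitDir]
  · exact (norm_unitDir h).le

lemma inner_unitDir_sub (T P : V) : ⟪unitDir T P, P - T⟫ = dist T P := by
  rw [unitDir, real_inner_smul_left, real_inner_self_eq_norm_sq, dist_comm, dist_eq_norm]
  rcases eq_or_ne ‖P - T‖ 0 with h | h
  · simp [h]
  · field_simp

lemma dist_sub_inner_unitDir_le (T P x : V) :
    dist T P - ⟪unitDir T P, x - T⟫ ≤ dist x P :=
  calc dist T P - ⟪unitDir T P, x - T⟫ = ⟪unitDir T P, P - x⟫ := by
        rw [← inner_unitDir_sub, ← inner_sub_right, sub_sub_sub_cancel_right]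
    _ ≤ ‖unitDir T P‖ * ‖P - x‖ := real_inner_le_norm _ _
    _ ≤ dist x P := by
        rw [dist_eq_norm, norm_sub_rev]
        exact mul_le_of_le_one_left (norm_nonneg _) (norm_unitDir_le_one T P)

/-- After clearing denominators this is `2 d r ≤ d ^ 2 + r ^ 2` for `d = dist T P`,
`r = dist x P`. -/
lemma dist_le_dist_sub_inner_unitDir_add {T P : V} (h : P ≠ T) (x : V) :
    dist x P ≤ dist T P - ⟪unitDir T P, x - T⟫ + ‖x - T‖ ^ 2 / (2 * dist T P) := by
  set d := dist T P
  have hd : 0 < d := dist_pos.mpr h.symm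
  have hsq : dist x P ^ 2 = d ^ 2 - 2 * ⟪P - T, x - T⟫ + ‖x - T‖ ^ 2 := by
    rw [dist_eq_norm, ← norm_neg, neg_sub, ← sub_sub_sub_cancel_right P x T, norm_sub_sq_real,
      ← dist_eq_norm, dist_comm]
  have hinner : ⟪unitDir T P, x - T⟫ = ⟪P - T, x - T⟫ / d := by
    rw [unitDir, real_inner_smul_left, ← dist_eq_norm, dist_comm, inv_mul_eq_div]
  have hrhs :
      d - ⟪P - T, x - T⟫ / d + ‖x - T‖ ^ 2 / (2 * d) = (d ^ 2 + dist x P ^ 2) / (2 * d) := by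
    rw [hsq]; field_simp; ring
  rw [hinner, hrhs, le_div_iff₀ (by positivity)]
  nlinarith [two_mul_le_add_sq d (dist x P)]

lemma mem_affineSpan_pair_of_dist_eq {T P x : V} (hP : P ≠ T) (hx : x ≠ T)
    (h : dist T P - ⟪unitDir T P, x - T⟫ = dist x P) : P ∈ line[ℝ, T, x] := by
  set e := unitDir T P
  have he : ‖e‖ = 1 := norm_unitDir hP
  have hPx : P - x = ‖P - x‖ • e := by
    have hinner : ⟪e, P - x⟫ = ‖e‖ * ‖P - x‖ := by
      rw [he, one_mul, ← dist_eq_norm, dist_comm, ← h, ← inner_unitDir_sub, ← inner_sub_right,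
        sub_sub_sub_cancel_right]
    simpa [he] using (inner_eq_norm_mul_iff_real.mp hinner).symm
  have hPT : P - T = dist T P • e := by
    rw [dist_comm, dist_eq_norm, show e = ‖P - T‖⁻¹ • (P - T) from rfl, smul_smul,
      mul_inv_cancel₀ (by simpa [sub_eq_zero]), one_smul]
  set c := dist T P - ‖P - x‖
  have hxT : x - T = c • e := by
    rw [sub_smul, ← hPT, ← hPx]; abel
  have hc : c ≠ 0 := by
    rintro hc
    rw [hc, zero_smul, sub_eq_zero] at hxT
    exact hx hxT
  have hP_eq : P = (dist T P / c) • (x -ᵥ T) +ᵥ T := by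
    rw [vsub_eq_sub, hxT, smul_smul, div_mul_cancel₀ _ hc, ← hPT, vadd_eq_add, sub_add_cancel]
  rw [hP_eq]
  exact smul_vsub_vadd_mem_affineSpan_pair _ _ _

lemma norm_le_of_isMin_of_le {g : V → ℝ} {T s : V} {a K : ℝ} (ha : 0 ≤ a)
    (hmin : ∀ x, g T ≤ g x)
    (hg : ∀ x, g x ≤ g T + a * ‖x - T‖ - ⟪s, x - T⟫ + K * ‖x - T‖ ^ 2) : ‖s‖ ≤ a := by
  rcases eq_or_ne s 0 with rfl | hs
  · simpa using ha
  have hs' : 0 < ‖s‖ := norm_pos_iff.mpr hs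
  have hslope : ∀ t > 0, ‖s‖ - a ≤ K * ‖s‖ * t := by
    intro t ht
    have hx := (hmin (T + t • s)).trans (hg (T + t • s))
    rw [add_sub_cancel_left, norm_smul, Real.norm_of_nonneg ht.le, real_inner_smul_right,
      real_inner_self_eq_norm_sq] at hx
    have : 0 ≤ (t * ‖s‖) * (a - ‖s‖ + K * ‖s‖ * t) := by nlinarith
    linarith [(mul_nonneg_iff_of_pos_left (by positivity)).mp this]
  have hlim : Tendsto (fun t => K * ‖s‖ * t) (𝓝[>] 0) (𝓝 0) := by
    have : Tendsto (fun t => K * ‖s‖ * t) (𝓝 0) (𝓝 (K * ‖s‖ * 0)) :=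
      (continuous_const.mul continuous_id).tendsto 0
    simpa using this.mono_left nhdsWithin_le_nhds
  have := ge_of_tendsto hlim (eventually_nhdsWithin_of_forall hslope)
  linarith

section Sums

variable {ι : Type*} (s : Finset ι) (P : ι → V)

lemma sum_dist_sub_inner_le (T x : V) :
    ∑ i ∈ s, dist T (P i) - ⟪∑ i ∈ s, unitDir T (P i), x - T⟫ ≤ ∑ i ∈ s, dist x (P i) := by
  rw [sum_inner, ← Finset.sum_sub_distrib]
  exact Finset.sum_le_sum fun i _ => dist_sub_inner_unitDir_le T (P i) x

lemma sum_dist_le {T : V} (hT : ∀ i ∈ s, P i ≠ T) (x : V) :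
    ∑ i ∈ s, dist x (P i) ≤ ∑ i ∈ s, dist T (P i) - ⟪∑ i ∈ s, unitDir T (P i), x - T⟫
      + (∑ i ∈ s, 1 / (2 * dist T (P i))) * ‖x - T‖ ^ 2 := by
  rw [sum_inner, Finset.sum_mul, ← Finset.sum_sub_distrib, ← Finset.sum_add_distrib]
  refine Finset.sum_le_sum fun i hi => ?_
  rw [one_div_mul_eq_div]
  exact dist_le_dist_sub_inner_unitDir_add (hT i hi) x

lemma sum_unitDir_eq_zero_of_isMin {T : V} (hT : ∀ i ∈ s, P i ≠ T)
    (hmin : ∀ x, ∑ i ∈ s, dist T (P i) ≤ ∑ i ∈ s, dist x (P i)) :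
    ∑ i ∈ s, unitDir T (P i) = 0 :=
  norm_le_zero_iff.mp <| norm_le_of_isMin_of_le (g := fun x => ∑ i ∈ s, dist x (P i))
    (K := ∑ i ∈ s, 1 / (2 * dist T (P i))) le_rfl hmin fun x => by
      linarith [sum_dist_le s P hT x]

lemma norm_sum_unitDir_le_one_of_isMin {Q : V} (hQ : ∀ i ∈ s, P i ≠ Q)
    (hmin : ∀ x, ∑ i ∈ s, dist Q (P i) ≤ dist x Q + ∑ i ∈ s, dist x (P i)) :
    ‖∑ i ∈ s, unitDir Q (P i)‖ ≤ 1 :=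
  norm_le_of_isMin_of_le (g := fun x => dist x Q + ∑ i ∈ s, dist x (P i)) (T := Q)
    (K := ∑ i ∈ s, 1 / (2 * dist Q (P i))) zero_le_one
    (by simpa using hmin) fun x => by
      rw [dist_self, zero_add, dist_eq_norm]
      linarith [sum_dist_le s P hQ x]

lemma isMin_of_sum_unitDir_eq_zero {T : V} (h : ∑ i ∈ s, unitDir T (P i) = 0) (x : V) :
    ∑ i ∈ s, dist T (P i) ≤ ∑ i ∈ s, dist x (P i) := by
  simpa [h] using sum_dist_sub_inner_le s P T x

lemma mem_affineSpan_pair_of_isMin_of_sum_unitDir_eq_zero {T T' : V} (hT' : ∀ i ∈ s, P i ≠ T')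
    (h : ∑ i ∈ s, unitDir T' (P i) = 0)
    (hmin : ∀ x, ∑ i ∈ s, dist T (P i) ≤ ∑ i ∈ s, dist x (P i)) (hne : T ≠ T') :
    ∀ i ∈ s, P i ∈ line[ℝ, T', T] := by
  have heq : ∑ i ∈ s, (dist T' (P i) - ⟪unitDir T' (P i), T - T'⟫) = ∑ i ∈ s, dist T (P i) := by
    rw [Finset.sum_sub_distrib, ← sum_inner, h, inner_zero_left, sub_zero]
    exact le_antisymm (isMin_of_sum_unitDir_eq_zero s P h T) (hmin T')
  intro i hi
  exact mem_affineSpan_pair_of_dist_eq (hT' i hi) hne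
    ((Finset.sum_eq_sum_iff_of_le fun j _ => dist_sub_inner_unitDir_le T' (P j) T).mp heq i hi)

end Sums

lemma cos_two_pi_div_three : Real.cos (2 * Real.pi / 3) = -(1 / 2) := by
  rw [show 2 * Real.pi / 3 = Real.pi - Real.pi / 3 by ring, Real.cos_pi_sub, Real.cos_pi_div_three]

lemma cos_angle_eq_inner_unitDir (A T B : V) :
    Real.cos (angle A T B) = ⟪unitDir T A, unitDir T B⟫ := by
  rw [EuclideanGeometry.angle, InnerProductGeometry.cos_angle, unitDir, unitDir,
    real_inner_smul_left, real_inner_smul_right, vsub_eq_sub, vsub_eq_sub, div_eq_inv_mul, mul_inv]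
  ring

lemma angle_eq_two_pi_div_three_iff (A T B : V) :
    angle A T B = 2 * Real.pi / 3 ↔ ⟪unitDir T A, unitDir T B⟫ = -(1 / 2) := by
  rw [← cos_angle_eq_inner_unitDir, ← cos_two_pi_div_three]
  exact (Real.injOn_cos.eq_iff ⟨angle_nonneg A T B, angle_le_pi A T B⟩
    ⟨by positivity, by linarith [Real.pi_pos]⟩).symm

lemma two_pi_div_three_le_angle_iff (A T B : V) :
    2 * Real.pi / 3 ≤ angle A T B ↔ ⟪unitDir T A, unitDir T B⟫ ≤ -(1 / 2) := by
  rw [← cos_angle_eq_inner_unitDir, ← cos_two_pi_div_three]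
  exact (Real.strictAntiOn_cos.le_iff_ge ⟨angle_nonneg A T B, angle_le_pi A T B⟩
    ⟨by positivity, by linarith [Real.pi_pos]⟩).symm

lemma left_ne_of_angle_eq_two_pi_div_three {A T B : V} (h : angle A T B = 2 * Real.pi / 3) :
    A ≠ T := by
  rintro rfl
  rw [angle_eq_two_pi_div_three_iff, unitDir, sub_self, smul_zero, inner_zero_left] at h
  norm_num at h

lemma inner_eq_neg_half_of_add_add_eq_zero {u v w : V} (hu : ‖u‖ = 1) (hv : ‖v‖ = 1)
    (hw : ‖w‖ = 1) (h : u + v + w = 0) : ⟪u, v⟫ = -(1 / 2) := by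
  have hnorm : ‖w‖ ^ 2 = ‖u + v‖ ^ 2 := by rw [eq_neg_of_add_eq_zero_right h, norm_neg]
  rw [norm_add_sq_real, hu, hv, hw] at hnorm
  linarith

lemma add_add_eq_zero_of_inner_eq_neg_half {u v w : V} (hu : ‖u‖ = 1) (hv : ‖v‖ = 1)
    (hw : ‖w‖ = 1) (huv : ⟪u, v⟫ = -(1 / 2)) (hvw : ⟪v, w⟫ = -(1 / 2))
    (hwu : ⟪w, u⟫ = -(1 / 2)) : u + v + w = 0 := by
  rw [← norm_eq_zero, ← sq_eq_zero_iff, norm_add_sq_real, norm_add_sq_real, inner_add_left, hu,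
    hv, hw, huv, hvw, real_inner_comm, hwu]
  norm_num

lemma angles_eq_two_pi_div_three_iff {A B C T : V} (hA : A ≠ T) (hB : B ≠ T) (hC : C ≠ T) :
    (angle A T B = 2 * Real.pi / 3 ∧ angle B T C = 2 * Real.pi / 3 ∧
        angle C T A = 2 * Real.pi / 3) ↔ unitDir T A + unitDir T B + unitDir T C = 0 := by
  have nA := norm_unitDir hA
  have nB := norm_unitDir hB
  have nC := norm_unitDir hC
  simp only [angle_eq_two_pi_div_three_iff]
  constructor
  · rintro ⟨hAB, hBC, hCA⟩
    exact add_add_eq_zero_of_inner_eq_neg_half nA nB nC hAB hBC hCA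
  · intro h
    refine ⟨inner_eq_neg_half_of_add_add_eq_zero nA nB nC h,
      inner_eq_neg_half_of_add_add_eq_zero nB nC nA ?_,
      inner_eq_neg_half_of_add_add_eq_zero nC nA nB ?_⟩ <;>
    rw [← h] <;> abel

lemma two_pi_div_three_le_angle_of_isMin {P Q R : V} (hQ : Q ≠ P) (hR : R ≠ P)
    (hmin : ∀ x, dist P P + dist P Q + dist P R ≤ dist x P + dist x Q + dist x R) :
    2 * Real.pi / 3 ≤ angle Q P R := by
  have hle : ‖unitDir P Q + unitDir P R‖ ≤ 1 := by
    simpa [Fin.sum_univ_two] using norm_sum_unitDir_le_one_of_isMin Finset.univ ![Q, R]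
      (by simp [Fin.forall_fin_two, hQ, hR]) (by simpa [Fin.sum_univ_two, add_assoc] using hmin)
  have hsq := norm_add_sq_real (unitDir P Q) (unitDir P R)
  rw [norm_unitDir hQ, norm_unitDir hR] at hsq
  rw [two_pi_div_three_le_angle_iff]
  nlinarith [norm_nonneg (unitDir P Q + unitDir P R)]

end FermatTorricelli

open FermatTorricelli in
/-- For a nondegenerate triangle `A B C` in the plane all of whose angles
are less than 120°, the Fermat–Torricelli point `T` (the minimizer of the sum of
distances to `A`, `B`, `C`) is the unique point at which the segments `TA`, `TB`, `TC`
pairwise form angles of exactly 120°. -/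
theorem fermat_point_characterization (A B C T : E2)
    (hind : AffineIndependent ℝ ![A, B, C])
    (hA : angle B A C < 2 * Real.pi / 3)
    (hB : angle A B C < 2 * Real.pi / 3)
    (hC : angle A C B < 2 * Real.pi / 3)
    (hmin : ∀ x : E2, dist T A + dist T B + dist T C ≤ dist x A + dist x B + dist x C) :
    (angle A T B = 2 * Real.pi / 3 ∧ angle B T C = 2 * Real.pi / 3 ∧
        angle C T A = 2 * Real.pi / 3) ∧
      ∀ T' : E2,
        (angle A T' B = 2 * Real.pi / 3 ∧ angle B T' C = 2 * Real.pi / 3 ∧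
          angle C T' A = 2 * Real.pi / 3) → T' = T := by
  have hAB : A ≠ B := by simpa using hind.injective.ne (show (0 : Fin 3) ≠ 1 by decide)
  have hAC : A ≠ C := by simpa using hind.injective.ne (show (0 : Fin 3) ≠ 2 by decide)
  have hBC : B ≠ C := by simpa using hind.injective.ne (show (1 : Fin 3) ≠ 2 by decide)
  have hAT : A ≠ T := by
    rintro rfl
    exact hA.not_ge (two_pi_div_three_le_angle_of_isMin hAB.symm hAC.symm hmin)
  have hBT : B ≠ T := by
    rintro rfl
    exact hB.not_ge (two_pi_div_three_le_angle_of_isMin hAB hBC.symm fun x => by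
      linarith [hmin x])
  have hCT : C ≠ T := by
    rintro rfl
    exact hC.not_ge (two_pi_div_three_le_angle_of_isMin hAC hBC fun x => by linarith [hmin x])
  have hmin' : ∀ x, ∑ i, dist T (![A, B, C] i) ≤ ∑ i, dist x (![A, B, C] i) := by
    simpa [Fin.sum_univ_three] using hmin
  have hbal : unitDir T A + unitDir T B + unitDir T C = 0 := by
    simpa [Fin.sum_univ_three] using sum_unitDir_eq_zero_of_isMin Finset.univ ![A, B, C]
      (by simpa [Fin.forall_fin_succ] using ⟨hAT, hBT, hCT⟩) hmin'
  refine ⟨(angles_eq_two_pi_div_three_iff hAT hBT hCT).mpr hbal, ?_⟩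
  rintro T' hT'
  by_contra hne
  have hA' := left_ne_of_angle_eq_two_pi_div_three hT'.1
  have hB' := left_ne_of_angle_eq_two_pi_div_three hT'.2.1
  have hC' := left_ne_of_angle_eq_two_pi_div_three hT'.2.2
  have hline := mem_affineSpan_pair_of_isMin_of_sum_unitDir_eq_zero Finset.univ ![A, B, C]
    (by simp [Fin.forall_fin_succ, hA', hB', hC'])
    (by simpa [Fin.sum_univ_three] using (angles_eq_two_pi_div_three_iff hA' hB' hC').mp hT')
    hmin' (Ne.symm hne)
  exact affineIndependent_iff_not_collinear_set.mp hind <| collinear_triple_of_mem_affineSpan_pair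
    (hline 0 (by simp)) (hline 1 (by simp)) (hline 2 (by simp))
end
end
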